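/- arXiv:1011.4140 — 5 statements merged into one kernel-verified Lean document; each statement's English description precedes it below -/
import Mathlib

section
/- Let n ≥ 1 and let p₀, p₁, p₂ be unit vectors in EuclideanSpace ℝ (Fin n) (points of the unit sphere S^{n-1}). Then the perimeter of the spherical geodesic triangle with these vertices satisfies d(p₀,p₁) + d(p₁,p₂) + d(p₂,p₀) ≤ 2π, where d denotes spherical geodesic distance. -/
open Real RealInnerProductSpace

/-- Spherical geodesic distance between points of the unit sphere `S^{n-1}`,
given as the angle `arccos ⟪p, q⟫` between unit vectors. -/
noncomputable def sphDist {n : ℕ} (p q : EuclideanSpace ℝ (Fin n)) : ℝ :=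
  Real.arccos ⟪p, q⟫

lemma arccos_antitone : Antitone Real.arccos := fun x y h => by
  unfold Real.arccos
  have := Real.monotone_arcsin h
  linarith

lemma arccos_inner_triangle {n : ℕ} (x y z : EuclideanSpace ℝ (Fin n))
    (hx : ‖x‖ = 1) (hy : ‖y‖ = 1) (hz : ‖z‖ = 1) :
    Real.arccos ⟪x, z⟫ ≤ Real.arccos ⟪x, y⟫ + Real.arccos ⟪y, z⟫ := by
  set a := Real.arccos ⟪x, y⟫ with ha
  set b := Real.arccos ⟪y, z⟫ with hb
  have hxy : |⟪x, y⟫| ≤ 1 := by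
    have := abs_real_inner_le_norm x y; rwa [hx, hy, one_mul] at this
  have hyz : |⟪y, z⟫| ≤ 1 := by
    have := abs_real_inner_le_norm y z; rwa [hy, hz, one_mul] at this
  rcases le_or_gt π (a + b) with hab | hab
  · exact (Real.arccos_le_pi _).trans hab
  · have hcosa : Real.cos a = ⟪x, y⟫ :=
      Real.cos_arccos (neg_le_of_abs_le hxy) (le_of_abs_le hxy)
    have hcosb : Real.cos b = ⟪y, z⟫ :=
      Real.cos_arccos (neg_le_of_abs_le hyz) (le_of_abs_le hyz)
    set x' : EuclideanSpace ℝ (Fin n) := x - ⟪x, y⟫ • y with hx'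
    set z' : EuclideanSpace ℝ (Fin n) := z - ⟪y, z⟫ • y with hz'
    have hy2 : ⟪y, y⟫ = (1 : ℝ) := by
      rw [real_inner_self_eq_norm_sq, hy]; norm_num
    have hx'n : ‖x'‖ ^ 2 = 1 - ⟪x, y⟫ ^ 2 := by
      rw [← real_inner_self_eq_norm_sq, hx']
      simp only [inner_sub_left, inner_sub_right, real_inner_smul_left,
        real_inner_smul_right, hy2]
      have : ⟪x, x⟫ = (1 : ℝ) := by
        rw [real_inner_self_eq_norm_sq, hx]; norm_num
      rw [this, real_inner_comm y x]
      ring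
    have hz'n : ‖z'‖ ^ 2 = 1 - ⟪y, z⟫ ^ 2 := by
      rw [← real_inner_self_eq_norm_sq, hz']
      simp only [inner_sub_left, inner_sub_right, real_inner_smul_left,
        real_inner_smul_right, hy2]
      have : ⟪z, z⟫ = (1 : ℝ) := by
        rw [real_inner_self_eq_norm_sq, hz]; norm_num
      rw [this, real_inner_comm z y]
      ring
    have hxn : ‖x'‖ = Real.sqrt (1 - ⟪x, y⟫ ^ 2) := by
      rw [← hx'n]; exact (Real.sqrt_sq (norm_nonneg _)).symm
    have hzn : ‖z'‖ = Real.sqrt (1 - ⟪y, z⟫ ^ 2) := by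
      rw [← hz'n]; exact (Real.sqrt_sq (norm_nonneg _)).symm
    have hix : ⟪x', z'⟫ = ⟪x, z⟫ - ⟪x, y⟫ * ⟪y, z⟫ := by
      rw [hx', hz']
      simp only [inner_sub_left, inner_sub_right, real_inner_smul_left,
        real_inner_smul_right, hy2]
      ring
    have hlb : -(‖x'‖ * ‖z'‖) ≤ ⟪x', z'⟫ :=
      neg_le_of_abs_le (abs_real_inner_le_norm x' z')
    have hsina : Real.sin a = Real.sqrt (1 - ⟪x, y⟫ ^ 2) := Real.sin_arccos _
    have hsinb : Real.sin b = Real.sqrt (1 - ⟪y, z⟫ ^ 2) := Real.sin_arccos _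
    have key : Real.cos (a + b) ≤ ⟪x, z⟫ := by
      rw [Real.cos_add, hcosa, hcosb, hsina, hsinb]
      rw [hxn, hzn] at hlb
      rw [hix] at hlb
      linarith
    calc Real.arccos ⟪x, z⟫ ≤ Real.arccos (Real.cos (a + b)) := arccos_antitone key
      _ = a + b := Real.arccos_cos
            (add_nonneg (Real.arccos_nonneg _) (Real.arccos_nonneg _)) hab.le


/-- The perimeter of a spherical geodesic triangle on `S^{n-1}` is at most `2π`. -/
theorem spherical_triangle_perimeter_le_two_pi (n : ℕ) (hn : 1 ≤ n)
    (p₀ p₁ p₂ : EuclideanSpace ℝ (Fin n))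
    (h₀ : ‖p₀‖ = 1) (h₁ : ‖p₁‖ = 1) (h₂ : ‖p₂‖ = 1) :
    sphDist p₀ p₁ + sphDist p₁ p₂ + sphDist p₂ p₀ ≤ 2 * π := by
  have h := arccos_inner_triangle p₂ (-p₁) p₀ h₂ (by simpa using h₁) h₀
  have e1 : ⟪p₂, -p₁⟫ = -⟪p₁, p₂⟫ := by
    rw [inner_neg_right, real_inner_comm]
  have e2 : ⟪-p₁, p₀⟫ = -⟪p₀, p₁⟫ := by
    rw [inner_neg_left, real_inner_comm]
  rw [e1, e2, Real.arccos_neg, Real.arccos_neg] at h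
  unfold sphDist
  linarith
end

section
/- Let n ≥ 1 and let p₀, p₁, p₂ be unit vectors in EuclideanSpace ℝ (Fin n) such that no two of them are antipodal (pᵢ ≠ −pⱼ for all i ≠ j) and such that p₀, p₁, p₂ are not all contained in a single linear subspace of dimension ≤ 2 of EuclideanSpace ℝ (Fin n) (i.e. they do not all lie on one great circle). Then the strict inequality d(p₀,p₁) + d(p₁,p₂) + d(p₂,p₀) < 2π holds, where d denotes spherical geodesic distance. -/
open Real RealInnerProductSpace

/-- Strict spherical triangle inequality: if `y` does not lie in the plane spanned
by unit vectors `x` and `z`, and `z ≠ -x`, then `arccos ⟪x,z⟫ < arccos ⟪x,y⟫ + arccos ⟪y,z⟫`. -/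
theorem arccos_inner_strict {E : Type*} [NormedAddCommGroup E] [InnerProductSpace ℝ E]
    {x y z : E} (hx : ‖x‖ = 1) (hy : ‖y‖ = 1) (hz : ‖z‖ = 1)
    (hxz : z ≠ -x) (hy' : y ∉ Submodule.span ℝ ({x, z} : Set E)) :
    Real.arccos ⟪x, z⟫ < Real.arccos ⟪x, y⟫ + Real.arccos ⟪y, z⟫ := by
  set c1 : ℝ := ⟪x, y⟫ with hc1
  set c2 : ℝ := ⟪y, z⟫ with hc2
  set c3 : ℝ := ⟪x, z⟫ with hc3
  have hb1 : |c1| ≤ 1 := by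
    simpa [hx, hy] using abs_real_inner_le_norm x y
  have hb2 : |c2| ≤ 1 := by
    simpa [hy, hz] using abs_real_inner_le_norm y z
  have hb3 : |c3| ≤ 1 := by
    simpa [hx, hz] using abs_real_inner_le_norm x z
  have hb1' := abs_le.1 hb1
  have hb2' := abs_le.1 hb2
  have hb3' := abs_le.1 hb3
  -- c3 > -1 since z ≠ -x
  have hc3ne : c3 ≠ -1 := by
    intro h
    apply hxz
    have h1 : ⟪x, -z⟫ = 1 := by
      rw [inner_neg_right, ← hc3, h]; norm_num
    have h2 := (inner_eq_one_iff_of_norm_eq_one hx (by simpa using hz)).1 h1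
    rw [h2]; simp
  have hc3gt : -1 < c3 := lt_of_le_of_ne hb3'.1 (Ne.symm hc3ne)
  have hsum0 : 0 ≤ Real.arccos c1 + Real.arccos c2 :=
    add_nonneg (Real.arccos_nonneg _) (Real.arccos_nonneg _)
  by_cases hπ : Real.arccos c1 + Real.arccos c2 < π
  · -- main case: show cos (a+c) < c3
    set u : E := x - c1 • y with hu
    set v : E := z - c2 • y with hv
    have hyy : ⟪y, y⟫ = 1 := by
      rw [real_inner_self_eq_norm_sq, hy]; norm_num
    have e1 : ⟪z, y⟫ = c2 := (real_inner_comm y z).trans hc2.symm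
    have e2 : ⟪y, x⟫ = c1 := (real_inner_comm x y).trans hc1.symm
    have e3 : ⟪x, y⟫ = c1 := hc1.symm
    have e4 : ⟪y, z⟫ = c2 := hc2.symm
    have e5 : ⟪x, z⟫ = c3 := hc3.symm
    have huv : ⟪u, v⟫ = c3 - c1 * c2 := by
      simp only [hu, hv, inner_sub_left, inner_sub_right, real_inner_smul_left,
        real_inner_smul_right, hyy]
      simp only [e1, e2, e3, e4, e5]
      ring
    have hun : ‖u‖ ^ 2 = 1 - c1 ^ 2 := by
      rw [← real_inner_self_eq_norm_sq]
      simp only [hu, inner_sub_left, inner_sub_right, real_inner_smul_left,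
        real_inner_smul_right, hyy]
      simp only [e1, e2, e3, e4, e5]
      rw [real_inner_self_eq_norm_sq, hx]
      ring
    have hvn : ‖v‖ ^ 2 = 1 - c2 ^ 2 := by
      rw [← real_inner_self_eq_norm_sq]
      simp only [hv, inner_sub_left, inner_sub_right, real_inner_smul_left,
        real_inner_smul_right, hyy]
      simp only [e1, e2, e3, e4, e5]
      rw [real_inner_self_eq_norm_sq, hz]
      ring
    have hunorm : ‖u‖ = Real.sqrt (1 - c1 ^ 2) := by
      rw [← hun]; exact (Real.sqrt_sq (norm_nonneg u)).symm
    have hvnorm : ‖v‖ = Real.sqrt (1 - c2 ^ 2) := by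
      rw [← hvn]; exact (Real.sqrt_sq (norm_nonneg v)).symm
    -- strict Cauchy-Schwarz for u, v
    have hstrict : -(‖u‖ * ‖v‖) < ⟪u, v⟫ := by
      rcases eq_or_lt_of_le (neg_le_of_abs_le (abs_real_inner_le_norm u v)) with heq | hlt
      · exfalso
        -- equality case: ⟪-u, v⟫ = ‖u‖ * ‖v‖, so ‖v‖ • (-u) = ‖u‖ • v
        have h1 : ⟪-u, v⟫ = ‖-u‖ * ‖v‖ := by
          rw [inner_neg_left, norm_neg]; linarith [heq]
        have h2 : ‖v‖ • (-u) = ‖-u‖ • v := inner_eq_norm_mul_iff_real.1 h1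
        rw [norm_neg] at h2
        by_cases hu0 : u = 0
        · -- x = c1 • y, so y ∈ span {x, z}
          have hx' : x = c1 • y := by
            have := sub_eq_zero.1 hu0
            exact this
          have hc1ne : c1 ≠ 0 := by
            intro h
            rw [h, zero_smul] at hx'
            rw [hx'] at hx; simp at hx
          apply hy'
          have hxmem : x ∈ Submodule.span ℝ ({x, z} : Set E) :=
            Submodule.subset_span (by simp)
          have hyx : y = c1⁻¹ • x := by
            rw [hx', smul_smul, inv_mul_cancel₀ hc1ne, one_smul]
          rw [hyx]
          exact Submodule.smul_mem _ _ hxmem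
        · by_cases hv0 : v = 0
          · have hz' : z = c2 • y := sub_eq_zero.1 hv0
            have hc2ne : c2 ≠ 0 := by
              intro h
              rw [h, zero_smul] at hz'
              rw [hz'] at hz; simp at hz
            apply hy'
            have hzmem : z ∈ Submodule.span ℝ ({x, z} : Set E) :=
              Submodule.subset_span (by simp)
            have hyz : y = c2⁻¹ • z := by
              rw [hz', smul_smul, inv_mul_cancel₀ hc2ne, one_smul]
            rw [hyz]
            exact Submodule.smul_mem _ _ hzmem
          · -- v = -(‖v‖/‖u‖) • u
            have hune : ‖u‖ ≠ 0 := fun h => hu0 (norm_eq_zero.1 h)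
            have hvne : ‖v‖ ≠ 0 := fun h => hv0 (norm_eq_zero.1 h)
            set t : ℝ := ‖v‖ / ‖u‖ with ht
            have htpos : 0 < t := div_pos (lt_of_le_of_ne (norm_nonneg v) (Ne.symm hvne))
              (lt_of_le_of_ne (norm_nonneg u) (Ne.symm hune))
            have hveq : v = -(t • u) := by
              have : ‖u‖⁻¹ • (‖v‖ • (-u)) = ‖u‖⁻¹ • (‖u‖ • v) := by rw [h2]
              rw [smul_smul, smul_smul, inv_mul_cancel₀ hune, one_smul] at this
              rw [← this, ht]
              simp [smul_smul, div_eq_mul_inv]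
              ring_nf
            -- z = c2 • y + v = (c2 + t*c1) • y - t • x
            have hzeq : z = (c2 + t * c1) • y - t • x := by
              have : z = c2 • y + v := by rw [hv]; abel
              rw [this, hveq, hu]
              rw [smul_sub, smul_smul]
              module
            by_cases hβ : c2 + t * c1 = 0
            · -- z = -t • x, so t = 1, z = -x
              rw [hβ, zero_smul, zero_sub] at hzeq
              have : ‖z‖ = t * ‖x‖ := by
                rw [hzeq, norm_neg, norm_smul, Real.norm_eq_abs, abs_of_pos htpos]
              rw [hx, hz, mul_one] at this
              apply hxz
              rw [hzeq, ← this, one_smul]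
            · apply hy'
              have hxm : x ∈ Submodule.span ℝ ({x, z} : Set E) :=
                Submodule.subset_span (by simp)
              have hzm : z ∈ Submodule.span ℝ ({x, z} : Set E) :=
                Submodule.subset_span (by simp)
              have : (c2 + t * c1)⁻¹ • (z + t • x) ∈ Submodule.span ℝ ({x, z} : Set E) :=
                Submodule.smul_mem _ _ (Submodule.add_mem _ hzm (Submodule.smul_mem _ _ hxm))
              have hyeq : (c2 + t * c1)⁻¹ • (z + t • x) = y := by
                rw [hzeq]
                rw [sub_add_cancel, smul_smul, inv_mul_cancel₀ hβ, one_smul]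
              rwa [hyeq] at this
      · exact hlt
    have hcos : Real.cos (Real.arccos c1 + Real.arccos c2) < c3 := by
      rw [Real.cos_add, Real.cos_arccos hb1'.1 hb1'.2, Real.cos_arccos hb2'.1 hb2'.2,
        Real.sin_arccos, Real.sin_arccos]
      have := hstrict
      rw [huv, hunorm, hvnorm] at this
      nlinarith [this]
    by_contra hcon
    push_neg at hcon
    have h1 : Real.cos (Real.arccos c3) ≤ Real.cos (Real.arccos c1 + Real.arccos c2) :=
      Real.cos_le_cos_of_nonneg_of_le_pi hsum0 (Real.arccos_le_pi _) hcon
    rw [Real.cos_arccos hb3'.1 hb3'.2] at h1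
    linarith
  · push_neg at hπ
    have : Real.arccos c3 < π := by
      refine lt_of_le_of_ne (Real.arccos_le_pi _) ?_
      intro h
      have := Real.arccos_eq_pi.1 h
      linarith
    linarith

/-- If no two vertices are antipodal and the three vertices do not lie on a common
great circle (a linear subspace of dimension at most 2), then the perimeter of the
spherical triangle is strictly less than `2π`. -/
theorem spherical_triangle_perimeter_lt_two_pi (n : ℕ) (hn : 1 ≤ n)
    (p₀ p₁ p₂ : EuclideanSpace ℝ (Fin n))
    (h₀ : ‖p₀‖ = 1) (h₁ : ‖p₁‖ = 1) (h₂ : ‖p₂‖ = 1)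
    (h01 : p₁ ≠ -p₀) (h12 : p₂ ≠ -p₁) (h20 : p₀ ≠ -p₂)
    (hplane : ¬ ∃ S : Submodule ℝ (EuclideanSpace ℝ (Fin n)),
      Module.finrank ℝ S ≤ 2 ∧ p₀ ∈ S ∧ p₁ ∈ S ∧ p₂ ∈ S) :
    sphDist p₀ p₁ + sphDist p₁ p₂ + sphDist p₂ p₀ < 2 * π := by
  simp only [sphDist]
  classical
  have hy' : (-p₀) ∉ Submodule.span ℝ ({p₁, p₂} : Set (EuclideanSpace ℝ (Fin n))) := by
    intro h
    apply hplane
    refine ⟨Submodule.span ℝ ({p₁, p₂} : Set (EuclideanSpace ℝ (Fin n))), ?_,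
      by simpa using Submodule.neg_mem _ h,
      Submodule.subset_span (by simp), Submodule.subset_span (by simp)⟩
    refine le_trans (finrank_span_le_card _) ?_
    rw [Set.toFinset_insert, Set.toFinset_singleton]
    exact le_trans (Finset.card_insert_le _ _) (by simp)
  have hnp : ‖(-p₀ : EuclideanSpace ℝ (Fin n))‖ = 1 := by simpa using h₀
  have key := arccos_inner_strict h₁ hnp h₂ h12 hy'
  have k1 : Real.arccos ⟪p₁, -p₀⟫ = π - Real.arccos ⟪p₀, p₁⟫ := by
    rw [inner_neg_right, Real.arccos_neg, real_inner_comm]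
  have k2 : Real.arccos ⟪-p₀, p₂⟫ = π - Real.arccos ⟪p₂, p₀⟫ := by
    rw [inner_neg_left, Real.arccos_neg, real_inner_comm]
  rw [k1, k2] at key
  linarith
end

section
/- Let n ≥ 1 and let p₀, p₁, p₂ be unit vectors in EuclideanSpace ℝ (Fin n) such that no two of them are antipodal (pᵢ ≠ −pⱼ for all i ≠ j) and such that p₀, p₁, p₂ do not all lie in a single linear subspace of dimension ≤ 2. If d(p₀,p₂) = θ, then the strict inequality d(p₀,p₁) + d(p₁,p₂) < 2π − θ holds, where d denotes spherical geodesic distance. -/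
open Real RealInnerProductSpace

section Aux

variable {E : Type*} [NormedAddCommGroup E] [InnerProductSpace ℝ E]

lemma span_pair_finrank_le (x y : E) :
    Module.finrank ℝ (Submodule.span ℝ ({x, y} : Set E)) ≤ 2 := by
  classical
  refine (finrank_span_le_card (R := ℝ) ({x, y} : Set E)).trans ?_
  rw [Set.toFinset_insert, Set.toFinset_singleton]
  exact (Finset.card_insert_le _ _).trans (by simp)

lemma neg_of_inner_eq_neg_one {a c : E} (ha : ‖a‖ = 1) (hc : ‖c‖ = 1)
    (h : ⟪a, c⟫ = -1) : c = -a := by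
  have hsq : ‖a + c‖ ^ 2 = 0 := by
    rw [norm_add_sq_real, ha, hc, h]; ring
  have h0 : a + c = 0 := by
    have : ‖a + c‖ = 0 := by nlinarith [norm_nonneg (a + c)]
    exact norm_eq_zero.mp this
  linear_combination (norm := module) h0

/-- Strict spherical triangle inequality for non-coplanar unit vectors. -/
lemma arccos_strict_tri {a b c : E} (ha : ‖a‖ = 1) (hb : ‖b‖ = 1) (hc : ‖c‖ = 1)
    (hac : c ≠ -a)
    (hsp : ¬ ∃ S : Submodule ℝ E, Module.finrank ℝ S ≤ 2 ∧ a ∈ S ∧ b ∈ S ∧ c ∈ S) :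
    Real.arccos ⟪a, c⟫ < Real.arccos ⟪a, b⟫ + Real.arccos ⟪b, c⟫ := by
  set t : ℝ := ⟪a, b⟫ with ht
  set s : ℝ := ⟪b, c⟫ with hs
  set r : ℝ := ⟪a, c⟫ with hr
  have habs_t : |t| ≤ 1 := by
    have := abs_real_inner_le_norm a b; rwa [ha, hb, one_mul] at this
  have habs_s : |s| ≤ 1 := by
    have := abs_real_inner_le_norm b c; rwa [hb, hc, one_mul] at this
  have habs_r : |r| ≤ 1 := by
    have := abs_real_inner_le_norm a c; rwa [ha, hc, one_mul] at this
  have hr1 : r ≤ 1 := (abs_le.mp habs_r).2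
  have hrneg : -1 < r := by
    rcases lt_or_eq_of_le (abs_le.mp habs_r).1 with h | h
    · exact h
    · exact absurd (neg_of_inner_eq_neg_one ha hc h.symm) hac
  -- helper to contradict coplanarity
  have hspan : ∀ x y : E, a ∈ Submodule.span ℝ ({x, y} : Set E) →
      b ∈ Submodule.span ℝ ({x, y} : Set E) → c ∈ Submodule.span ℝ ({x, y} : Set E) → False := by
    intro x y hax hbx hcx
    exact hsp ⟨_, span_pair_finrank_le x y, hax, hbx, hcx⟩
  by_cases hsum : Real.arccos t + Real.arccos s ≤ π
  · -- main case
    set u : E := a - t • b with hu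
    set v : E := c - s • b with hv
    have huv : ⟪u, v⟫ = r - t * s := by
      simp only [hu, hv, inner_sub_left, inner_sub_right, real_inner_smul_left,
        real_inner_smul_right, real_inner_self_eq_norm_sq, hb, norm_smul,
        Real.norm_eq_abs, mul_pow, sq_abs, ht, hs, hr, real_inner_comm b a,
        real_inner_comm c a, real_inner_comm c b]
      ring
    have hnu : ‖u‖ ^ 2 = 1 - t ^ 2 := by
      rw [← real_inner_self_eq_norm_sq]
      simp only [hu, inner_sub_left, inner_sub_right, real_inner_smul_left,
        real_inner_smul_right, real_inner_self_eq_norm_sq, ha, hb, norm_smul,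
        Real.norm_eq_abs, mul_pow, sq_abs, ht, real_inner_comm b a]
      ring
    have hnv : ‖v‖ ^ 2 = 1 - s ^ 2 := by
      rw [← real_inner_self_eq_norm_sq]
      simp only [hv, inner_sub_left, inner_sub_right, real_inner_smul_left,
        real_inner_smul_right, real_inner_self_eq_norm_sq, hb, hc, norm_smul,
        Real.norm_eq_abs, mul_pow, sq_abs, hs, real_inner_comm c b]
      ring
    have hu0 : u ≠ 0 := by
      intro h0
      have hab : a = t • b := by
        have : a - t • b = 0 := h0
        linear_combination (norm := module) this
      refine hspan b c ?_ ?_ ?_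
      · rw [hab]
        exact Submodule.smul_mem _ _ (Submodule.subset_span (by simp))
      · exact Submodule.subset_span (by simp)
      · exact Submodule.subset_span (by simp)
    have hv0 : v ≠ 0 := by
      intro h0
      have hcb : c = s • b := by
        have : c - s • b = 0 := h0
        linear_combination (norm := module) this
      refine hspan a b (Submodule.subset_span (by simp)) (Submodule.subset_span (by simp)) ?_
      rw [hcb]
      exact Submodule.smul_mem _ _ (Submodule.subset_span (by simp))
    have hCS : -(‖u‖ * ‖v‖) < ⟪u, v⟫ := by
      rcases lt_or_eq_of_le (neg_le_of_abs_le (abs_real_inner_le_norm u v)) with h | h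
      · exact h
      -- equality case: v is a negative multiple of u, giving coplanarity
      exfalso
      have heq : ⟪u, -v⟫ = ‖u‖ * ‖-v‖ := by
        rw [inner_neg_right, norm_neg, ← h]; ring
      have := inner_eq_norm_mul_iff_real.mp heq
      -- ‖-v‖ • u = ‖u‖ • (-v)
      rw [norm_neg] at this
      have hun : (‖u‖ : ℝ) ≠ 0 := norm_ne_zero_iff.mpr hu0
      set k : ℝ := ‖v‖ / ‖u‖ with hk
      have hvu : v = (-k) • u := by
        have h2 : ‖u‖ • v = -(‖v‖ • u) := by
          rw [this, smul_neg, neg_neg]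
        calc v = (‖u‖⁻¹ * ‖u‖) • v := by rw [inv_mul_cancel₀ hun, one_smul]
          _ = ‖u‖⁻¹ • (‖u‖ • v) := by rw [mul_smul]
          _ = ‖u‖⁻¹ • (-(‖v‖ • u)) := by rw [h2]
          _ = (-k) • u := by
              rw [hk, div_eq_inv_mul]; module
      refine hspan a b (Submodule.subset_span (by simp)) (Submodule.subset_span (by simp)) ?_
      rw [Submodule.mem_span_pair]
      refine ⟨-k, s + k * t, ?_⟩
      have hc' : c = s • b + v := by
        rw [hv]; module
      rw [hc', hvu, hu]
      module
    have hnu' : ‖u‖ = Real.sqrt (1 - t ^ 2) := by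
      rw [← hnu, Real.sqrt_sq (norm_nonneg u)]
    have hnv' : ‖v‖ = Real.sqrt (1 - s ^ 2) := by
      rw [← hnv, Real.sqrt_sq (norm_nonneg v)]
    have hcos : Real.cos (Real.arccos t + Real.arccos s) < r := by
      rw [Real.cos_add, Real.cos_arccos (abs_le.mp habs_t).1 (abs_le.mp habs_t).2,
        Real.cos_arccos (abs_le.mp habs_s).1 (abs_le.mp habs_s).2,
        Real.sin_arccos, Real.sin_arccos]
      have := hCS
      rw [huv, hnu', hnv'] at this
      linarith
    by_contra hcon
    push_neg at hcon
    have h1 : 0 ≤ Real.arccos t + Real.arccos s :=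
      add_nonneg (Real.arccos_nonneg _) (Real.arccos_nonneg _)
    have h2 : Real.arccos r ≤ π := Real.arccos_le_pi _
    have := Real.cos_le_cos_of_nonneg_of_le_pi h1 h2 hcon
    rw [Real.cos_arccos (le_of_lt hrneg) hr1] at this
    linarith
  · -- degenerate case: α + β > π, while arccos r < π
    push_neg at hsum
    have : Real.arccos r < π := by
      rcases lt_or_eq_of_le (Real.arccos_le_pi r) with h | h
      · exact h
      · exfalso
        have := Real.arccos_eq_pi.mp h
        linarith
    linarith

end Aux

/-- Strict two-arc geodesic path estimate: if no two of the three points are antipodal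
and they do not lie on a common great circle, then the length of the path `p₀ p₁ p₂`
is strictly less than `2π - θ`, where `θ = d(p₀,p₂)`. -/
theorem spherical_two_arc_path_lt (n : ℕ) (hn : 1 ≤ n)
    (p₀ p₁ p₂ : EuclideanSpace ℝ (Fin n))
    (h₀ : ‖p₀‖ = 1) (h₁ : ‖p₁‖ = 1) (h₂ : ‖p₂‖ = 1)
    (h01 : p₁ ≠ -p₀) (h12 : p₂ ≠ -p₁) (h20 : p₀ ≠ -p₂)
    (hplane : ¬ ∃ S : Submodule ℝ (EuclideanSpace ℝ (Fin n)),
      Module.finrank ℝ S ≤ 2 ∧ p₀ ∈ S ∧ p₁ ∈ S ∧ p₂ ∈ S)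
    (θ : ℝ) (hθ : sphDist p₀ p₂ = θ) :
    sphDist p₀ p₁ + sphDist p₁ p₂ < 2 * π - θ := by
  have hb : ‖(-p₁ : EuclideanSpace ℝ (Fin n))‖ = 1 := by rwa [norm_neg]
  have hac : p₂ ≠ -p₀ := by
    intro h
    apply h20
    rw [h]; simp
  have hsp : ¬ ∃ S : Submodule ℝ (EuclideanSpace ℝ (Fin n)),
      Module.finrank ℝ S ≤ 2 ∧ p₀ ∈ S ∧ (-p₁) ∈ S ∧ p₂ ∈ S := by
    rintro ⟨S, hS, h0', h1', h2'⟩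
    exact hplane ⟨S, hS, h0', by simpa using S.neg_mem h1', h2'⟩
  have key := arccos_strict_tri h₀ hb h₂ hac hsp
  have e1 : (⟪p₀, -p₁⟫ : ℝ) = -⟪p₀, p₁⟫ := inner_neg_right _ _
  have e2 : (⟪-p₁, p₂⟫ : ℝ) = -⟪p₁, p₂⟫ := inner_neg_left _ _
  rw [e1, e2, Real.arccos_neg, Real.arccos_neg] at key
  simp only [sphDist] at hθ ⊢
  linarith
end

section
/- Let m ≥ 2 and n ≥ 1 be integers, and let p : ZMod (2m+1) → EuclideanSpace ℝ (Fin n) be unit vectors with p(i+1) ≠ p(i) for all i (a closed geodesic polygonal curve on S^{n-1} with 2m+1 vertices). Then its total length satisfies Σ_{i=0}^{2m} d(pᵢ, p_{i+1}) ≤ 2mπ, where indices are taken mod 2m+1 and d denotes spherical geodesic distance. -/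
open Real RealInnerProductSpace

lemma sphDist_le_pi {n : ℕ} (p q : EuclideanSpace ℝ (Fin n)) : sphDist p q ≤ π :=
  Real.arccos_le_pi _

/-- Triangle inequality for the spherical distance between unit vectors. -/
lemma sphDist_triangle {n : ℕ} (a b c : EuclideanSpace ℝ (Fin n))
    (ha : ‖a‖ = 1) (hb : ‖b‖ = 1) (hc : ‖c‖ = 1) :
    sphDist a c ≤ sphDist a b + sphDist b c := by
  have hab : |⟪a, b⟫| ≤ 1 := by
    simpa [ha, hb] using abs_real_inner_le_norm a b
  have hbc : |⟪b, c⟫| ≤ 1 := by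
    simpa [hb, hc] using abs_real_inner_le_norm b c
  set α := Real.arccos ⟪a, b⟫ with hα
  set β := Real.arccos ⟪b, c⟫ with hβ
  have hα0 : 0 ≤ α := Real.arccos_nonneg _
  have hβ0 : 0 ≤ β := Real.arccos_nonneg _
  by_cases hsum : α + β ≤ π
  · -- show ⟪a,c⟫ ≥ cos (α+β)
    have hcosα : Real.cos α = ⟪a, b⟫ :=
      Real.cos_arccos (by linarith [abs_le.1 hab |>.1]) (by linarith [abs_le.1 hab |>.2])
    have hcosβ : Real.cos β = ⟪b, c⟫ :=
      Real.cos_arccos (by linarith [abs_le.1 hbc |>.1]) (by linarith [abs_le.1 hbc |>.2])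
    have hsinα : Real.sin α = Real.sqrt (1 - ⟪a, b⟫ ^ 2) := Real.sin_arccos _
    have hsinβ : Real.sin β = Real.sqrt (1 - ⟪b, c⟫ ^ 2) := Real.sin_arccos _
    -- orthogonal components
    set a' : EuclideanSpace ℝ (Fin n) := a - ⟪a, b⟫ • b with ha'
    set c' : EuclideanSpace ℝ (Fin n) := c - ⟪c, b⟫ • b with hc'
    have hb2 : ⟪b, b⟫ = (1 : ℝ) := by
      rw [real_inner_self_eq_norm_sq, hb]; norm_num
    have ha2 : ⟪a, a⟫ = (1 : ℝ) := by
      rw [real_inner_self_eq_norm_sq, ha]; norm_num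
    have hc2 : ⟪c, c⟫ = (1 : ℝ) := by
      rw [real_inner_self_eq_norm_sq, hc]; norm_num
    have hcb : ⟪c, b⟫ = ⟪b, c⟫ := real_inner_comm b c
    have key : ⟪a', c'⟫ = ⟪a, c⟫ - ⟪a, b⟫ * ⟪b, c⟫ := by
      simp only [ha', hc', inner_sub_sub_self, inner_smul_left, inner_smul_right,
        real_inner_smul_left, real_inner_smul_right, inner_sub_left, inner_sub_right]
      rw [real_inner_comm b a] at *
      ring_nf
      rw [hcb, hb2]
      ring
    have hna : ‖a'‖ ^ 2 = 1 - ⟪a, b⟫ ^ 2 := by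
      rw [← real_inner_self_eq_norm_sq]
      simp only [ha', inner_sub_left, inner_sub_right, real_inner_smul_left,
        real_inner_smul_right]
      rw [real_inner_comm b a, hb2, ha2]
      ring
    have hnc : ‖c'‖ ^ 2 = 1 - ⟪b, c⟫ ^ 2 := by
      rw [← real_inner_self_eq_norm_sq]
      simp only [hc', inner_sub_left, inner_sub_right, real_inner_smul_left,
        real_inner_smul_right]
      rw [hcb, hb2, hc2, real_inner_comm c b, hcb]
      ring
    have hna' : ‖a'‖ = Real.sqrt (1 - ⟪a, b⟫ ^ 2) := by
      rw [← hna]; exact (Real.sqrt_sq (norm_nonneg _)).symm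
    have hnc' : ‖c'‖ = Real.sqrt (1 - ⟪b, c⟫ ^ 2) := by
      rw [← hnc]; exact (Real.sqrt_sq (norm_nonneg _)).symm
    have hCS : -(‖a'‖ * ‖c'‖) ≤ ⟪a', c'⟫ := by
      have := abs_real_inner_le_norm a' c'
      have := abs_le.1 this
      linarith [this.1]
    have hge : Real.cos (α + β) ≤ ⟪a, c⟫ := by
      rw [Real.cos_add, hcosα, hcosβ, hsinα, hsinβ]
      have : ⟪a, c⟫ = ⟪a, b⟫ * ⟪b, c⟫ + ⟪a', c'⟫ := by rw [key]; ring
      rw [this]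
      have := hCS
      rw [hna', hnc'] at this
      linarith
    calc sphDist a c = Real.arccos ⟪a, c⟫ := rfl
      _ ≤ Real.arccos (Real.cos (α + β)) := arccos_antitone hge
      _ = α + β := Real.arccos_cos (by linarith) hsum
  · calc sphDist a c ≤ π := Real.arccos_le_pi _
      _ ≤ α + β := by linarith

lemma sphDist_neg_neg {n : ℕ} (p q : EuclideanSpace ℝ (Fin n)) :
    sphDist (-p) (-q) = sphDist p q := by
  unfold sphDist
  rw [inner_neg_neg]

lemma sphDist_chain {n : ℕ} (r : ℕ → EuclideanSpace ℝ (Fin n))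
    (hr : ∀ i, ‖r i‖ = 1) (N : ℕ) :
    sphDist (r 0) (r N) ≤ ∑ i ∈ Finset.range N, sphDist (r i) (r (i + 1)) := by
  induction N with
  | zero =>
    have h1 : ⟪r 0, r 0⟫ = (1 : ℝ) := by
      rw [real_inner_self_eq_norm_sq, hr 0]; norm_num
    simp only [Finset.range_zero, Finset.sum_empty]
    unfold sphDist
    rw [h1, Real.arccos_one]
  | succ N ih =>
    rw [Finset.sum_range_succ]
    calc sphDist (r 0) (r (N + 1)) ≤ sphDist (r 0) (r N) + sphDist (r N) (r (N + 1)) :=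
          sphDist_triangle _ _ _ (hr 0) (hr N) (hr (N + 1))
      _ ≤ (∑ i ∈ Finset.range N, sphDist (r i) (r (i + 1))) + sphDist (r N) (r (N + 1)) := by
          linarith

/-- A closed geodesic polygonal curve on `S^{n-1}` with `2m+1` vertices (`m ≥ 2`)
has length at most `2mπ`. -/
theorem closed_spherical_polygon_length_le (m n : ℕ) (hm : 2 ≤ m) (hn : 1 ≤ n)
    (p : ZMod (2 * m + 1) → EuclideanSpace ℝ (Fin n))
    (hnorm : ∀ i, ‖p i‖ = 1) (hne : ∀ i, p (i + 1) ≠ p i) :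
    ∑ i : ZMod (2 * m + 1), sphDist (p i) (p (i + 1)) ≤ 2 * m * π := by
  -- rewrite the sum over ZMod (2*m+1) as a sum over range (2*m+1)
  have hsum : ∑ i : ZMod (2*m+1), sphDist (p i) (p (i + 1))
      = ∑ i ∈ Finset.range (2*m+1),
          sphDist (p (i : ZMod (2*m+1))) (p ((i : ZMod (2*m+1)) + 1)) := by
    rw [← Fin.sum_univ_eq_sum_range fun i =>
      sphDist (p (i : ZMod (2*m+1))) (p ((i : ZMod (2*m+1)) + 1))]
    have hbij : Function.Bijective (fun i : Fin (2*m+1) => ((i : ℕ) : ZMod (2*m+1))) := by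
      constructor
      · intro i j hij
        have : (i : ℕ) = (j : ℕ) := by
          have h := congrArg ZMod.val hij
          simpa [ZMod.val_natCast, Nat.mod_eq_of_lt i.isLt, Nat.mod_eq_of_lt j.isLt] using h
        exact Fin.ext this
      · intro x
        exact ⟨⟨x.val, x.val_lt⟩, by simp [ZMod.natCast_zmod_val]⟩
    exact (Fintype.sum_bijective _ hbij
      (fun i : Fin (2*m+1) => sphDist (p ((i : ℕ) : ZMod (2*m+1)))
        (p (((i : ℕ) : ZMod (2*m+1)) + 1)))
      (fun j : ZMod (2*m+1) => sphDist (p j) (p (j + 1))) (fun i => rfl)).symm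
  -- the alternating-sign sequence
  set r : ℕ → EuclideanSpace ℝ (Fin n) := fun i => ((-1 : ℝ) ^ i) • p (i : ZMod (2*m+1))
    with hr
  have hrn : ∀ i, ‖r i‖ = 1 := by
    intro i
    simp only [hr, norm_smul, norm_pow, norm_neg, norm_one, one_pow, one_mul]
    exact hnorm _
  have hedge : ∀ i : ℕ, sphDist (r i) (r (i + 1))
      = π - sphDist (p (i : ZMod (2*m+1))) (p ((i : ZMod (2*m+1)) + 1)) := by
    intro i
    have h1 : ⟪r i, r (i + 1)⟫ = -⟪p (i : ZMod (2*m+1)), p ((i : ZMod (2*m+1)) + 1)⟫ := by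
      have hs : ((-1:ℝ)^i) * ((-1)^(i+1)) = -1 := by
        rw [← pow_add]; exact Odd.neg_one_pow ⟨i, by ring⟩
      simp only [hr, real_inner_smul_left, real_inner_smul_right, Nat.cast_add, Nat.cast_one]
      rw [← mul_assoc, mul_comm ((-1:ℝ)^(i+1)) ((-1:ℝ)^i), hs, neg_one_mul]
    unfold sphDist
    rw [h1, Real.arccos_neg]
  have hrk : r (2*m+1) = -p 0 := by
    have h1 : (((2*m+1) : ℕ) : ZMod (2*m+1)) = 0 := by
      exact_mod_cast ZMod.natCast_self (2*m+1)
    have h2 : ((-1 : ℝ) ^ (2*m+1)) = -1 := by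
      simp [pow_succ, pow_mul]
    rw [hr]
    simp only [h1, h2]
    simp
  have hr0 : r 0 = p 0 := by
    rw [hr]
    simp
  have hchain := sphDist_chain r hrn (2*m+1)
  rw [hr0, hrk] at hchain
  have hpi : sphDist (p 0) (-p 0) = π := by
    unfold sphDist
    have h1 : ⟪p 0, -p 0⟫ = (-1 : ℝ) := by
      rw [inner_neg_right, real_inner_self_eq_norm_sq, hnorm 0]
      norm_num
    rw [h1, Real.arccos_neg_one]
  rw [hpi] at hchain
  have hsum2 : ∑ i ∈ Finset.range (2*m+1), sphDist (r i) (r (i + 1))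
      = (2*m+1) * π - ∑ i ∈ Finset.range (2*m+1),
          sphDist (p (i : ZMod (2*m+1))) (p ((i : ZMod (2*m+1)) + 1)) := by
    rw [Finset.sum_congr rfl fun i _ => hedge i, Finset.sum_sub_distrib]
    simp [mul_comm]
  rw [hsum2] at hchain
  rw [hsum]
  linarith
end

section
/- Let m ≥ 2 and n ≥ 1 be integers, and let p₀, p₁, …, p_{2m} be unit vectors in EuclideanSpace ℝ (Fin n) with d(p₀, p_{2m}) = θ. If equality Σ_{i=0}^{2m−1} d(pᵢ, p_{i+1}) = 2mπ − θ holds (d the spherical geodesic distance), then all the points p₀, …, p_{2m} lie in a single linear subspace of dimension ≤ 2 of EuclideanSpace ℝ (Fin n), i.e. on a common great circle of S^{n-1}. -/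
open Real RealInnerProductSpace

/-! Replacing `p i` by `(-1) ^ i • p i` turns every side of the path into its supplement, so
the new path has length `2mπ - (2mπ - θ) = θ`, the distance between its endpoints, which are
unchanged. Then every initial segment of the new path is tight as well, and by the equality case
of the triangle inequality for angles each new point lies in the plane spanned by the first point
and the previous one, as soon as the previous one is not a positive multiple of the first. -/

open InnerProductGeometry Submodule

section

variable {V : Type*} [NormedAddCommGroup V] [InnerProductSpace ℝ V]

theorem mem_span_pair_of_angle_eq_angle_add_angle {x y z : V} (hy : y ≠ 0)
    (hxy : angle x y ≠ 0) (h : angle x z = angle x y + angle y z) :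
    z ∈ span ℝ {x, y} := by
  rcases (angle_eq_angle_add_angle_iff hy).1 h with hxz | hmem
  · obtain ⟨-, r, -, rfl⟩ := angle_eq_pi_iff.1 hxz
    exact smul_mem _ r (subset_span (Set.mem_insert x _))
  · obtain ⟨a, c, hy_eq⟩ := mem_span_pair.1 hmem
    have hc : (c : ℝ) ≠ 0 := by
      rintro hc
      obtain rfl : c = 0 := NNReal.coe_eq_zero.1 hc
      rw [zero_smul, add_zero] at hy_eq
      subst hy_eq
      have hx : x ≠ 0 := by rintro rfl; simp at hy
      have ha : (0 : ℝ) < a := lt_of_le_of_ne a.2 fun ha => hy (by simp [NNReal.smul_def, ← ha])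
      exact hxy (by rw [NNReal.smul_def, angle_smul_right_of_pos _ _ ha, angle_self hx])
    have hz : (c : ℝ) • z = y - (a : ℝ) • x := by
      rw [← hy_eq, NNReal.smul_def, NNReal.smul_def]; abel
    rw [← smul_mem_iff _ hc, hz]
    exact sub_mem (subset_span (Set.mem_insert_of_mem _ rfl))
      (smul_mem _ _ (subset_span (Set.mem_insert x _)))

theorem angle_le_sum_angle {q : ℕ → V} {a b : ℕ} (ha : q a ≠ 0) (hab : a ≤ b) :
    angle (q a) (q b) ≤ ∑ i ∈ Finset.Ico a b, angle (q i) (q (i + 1)) := by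
  induction b, hab using Nat.le_induction with
  | base => simp [angle_self ha]
  | succ b hab ih =>
    rw [Finset.sum_Ico_succ_top hab]
    linarith [angle_le_angle_add_angle (q a) (q b) (q (b + 1))]

theorem angle_eq_sum_angle_of_le {q : ℕ → V} {j N : ℕ} (h0 : q 0 ≠ 0) (hj : q j ≠ 0)
    (hjN : j ≤ N)
    (h : angle (q 0) (q N) = ∑ i ∈ Finset.range N, angle (q i) (q (i + 1))) :
    angle (q 0) (q j) = ∑ i ∈ Finset.range j, angle (q i) (q (i + 1)) := by
  have h0j := angle_le_sum_angle h0 (Nat.zero_le j)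
  have hjN' := angle_le_sum_angle hj hjN
  rw [← Finset.range_eq_Ico] at h0j
  rw [← Finset.sum_range_add_sum_Ico _ hjN] at h
  linarith [angle_le_angle_add_angle (q 0) (q j) (q N)]

theorem exists_forall_mem_span_pair_of_angle_eq_sum {q : ℕ → V} {N : ℕ}
    (hq : ∀ i, q i ≠ 0)
    (h : angle (q 0) (q N) = ∑ i ∈ Finset.range N, angle (q i) (q (i + 1))) :
    ∃ a b : V, ∀ i ≤ N, q i ∈ span ℝ {a, b} := by
  have hpart := fun j (hj : j ≤ N) => angle_eq_sum_angle_of_le (hq 0) (hq j) hj h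
  suffices ∀ j ≤ N, ∃ a b : V, ∀ i ≤ j, q i ∈ span ℝ {a, b} from this N le_rfl
  intro j hj
  induction j with
  | zero =>
    refine ⟨q 0, q 0, fun i hi => ?_⟩
    rw [Nat.le_zero.1 hi]
    exact subset_span (Set.mem_insert _ _)
  | succ j ih =>
    obtain ⟨a, b, hab⟩ := ih (by omega)
    by_cases h0 : angle (q 0) (q j) = 0
    · refine ⟨q 0, q (j + 1), fun i hi => ?_⟩
      rcases Nat.le_succ_iff.1 hi with hi | rfl
      · have hi0 : angle (q 0) (q i) = 0 := by
          refine le_antisymm ?_ (angle_nonneg _ _)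
          rw [← h0, hpart i (by omega), hpart j (by omega)]
          exact Finset.sum_le_sum_of_subset_of_nonneg (Finset.range_subset_range.2 hi)
            fun _ _ _ => angle_nonneg _ _
        obtain ⟨-, r, -, hr⟩ := angle_eq_zero_iff.1 hi0
        rw [hr]
        exact smul_mem _ r (subset_span (Set.mem_insert _ _))
      · exact subset_span (Set.mem_insert_of_mem _ rfl)
    · refine ⟨a, b, fun i hi => ?_⟩
      rcases Nat.le_succ_iff.1 hi with hi | rfl
      · exact hab i hi
      have hstep : angle (q 0) (q (j + 1)) = angle (q 0) (q j) + angle (q j) (q (j + 1)) := by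
        rw [hpart j (by omega), hpart (j + 1) hj, Finset.sum_range_succ]
      refine span_le.2 ?_ (mem_span_pair_of_angle_eq_angle_add_angle (hq j) h0 hstep)
      rintro v (rfl | rfl)
      exacts [hab 0 (Nat.zero_le j), hab j le_rfl]

theorem finrank_span_pair_le_two (a b : V) : Module.finrank ℝ (span ℝ {a, b}) ≤ 2 := by
  classical
  have h := finrank_span_finset_le_card (R := ℝ) ({a, b} : Finset V)
  rw [Finset.coe_pair] at h
  exact h.trans Finset.card_le_two

theorem angle_neg_one_pow_smul_neg_one_pow_succ_smul (i : ℕ) (x y : V) :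
    angle ((-1 : ℝ) ^ i • x) ((-1 : ℝ) ^ (i + 1) • y) = π - angle x y := by
  rw [pow_succ, mul_neg_one, neg_smul, angle_neg_right,
    angle_smul_smul (pow_ne_zero _ (by norm_num))]

end

theorem sphDist_eq_angle {n : ℕ} {p q : EuclideanSpace ℝ (Fin n)} (hp : ‖p‖ = 1)
    (hq : ‖q‖ = 1) : sphDist p q = angle p q := by
  simp [sphDist, angle, hp, hq]

theorem spherical_polygonal_path_eq_great_circle_general (m n : ℕ)
    (p : Fin (2 * m + 1) → EuclideanSpace ℝ (Fin n))
    (hnorm : ∀ i, ‖p i‖ = 1)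
    (θ : ℝ) (hθ : sphDist (p 0) (p (Fin.last (2 * m))) = θ)
    (heq : ∑ i : Fin (2 * m), sphDist (p i.castSucc) (p i.succ) = 2 * m * π - θ) :
    ∃ S : Submodule ℝ (EuclideanSpace ℝ (Fin n)),
      Module.finrank ℝ S ≤ 2 ∧ ∀ i, p i ∈ S := by
  set q : ℕ → EuclideanSpace ℝ (Fin n) := fun i => (-1 : ℝ) ^ i • p (Fin.clamp i (2 * m))
  have hclamp (i : Fin (2 * m + 1)) : Fin.clamp i (2 * m) = i := Fin.ext (by simp [i.is_le])
  have hq_ne (i : ℕ) : q i ≠ 0 := by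
    simp [q, ← norm_ne_zero_iff, hnorm]
  have hq_tight : angle (q 0) (q (2 * m)) =
      ∑ i ∈ Finset.range (2 * m), angle (q i) (q (i + 1)) := by
    rw [← Fin.sum_univ_eq_sum_range (fun i => angle (q i) (q (i + 1)))]
    have hside (i : Fin (2 * m)) :
        angle (q i) (q (i + 1)) = π - sphDist (p i.castSucc) (p i.succ) := by
      rw [sphDist_eq_angle (hnorm _) (hnorm _), ← angle_neg_one_pow_smul_neg_one_pow_succ_smul i]
      simp only [q]
      congr 4 <;> exact Fin.ext (by simp)
    have hends : angle (q 0) (q (2 * m)) = θ := by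
      rw [← hθ, sphDist_eq_angle (hnorm _) (hnorm _)]
      simp [q, Fin.clamp_eq_last, show Fin.clamp 0 (2 * m) = 0 from hclamp 0]
    simp only [hside, Finset.sum_sub_distrib, heq, hends, Finset.sum_const, Finset.card_univ,
      Fintype.card_fin, nsmul_eq_mul]
    push_cast
    ring
  obtain ⟨a, b, hab⟩ := exists_forall_mem_span_pair_of_angle_eq_sum hq_ne hq_tight
  refine ⟨span ℝ {a, b}, finrank_span_pair_le_two a b, fun i => ?_⟩
  have hpi : p i = (-1 : ℝ) ^ (i : ℕ) • q i := by
    simp [q, hclamp, smul_smul, ← pow_add, ← two_mul]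
  rw [hpi]
  exact smul_mem _ _ (hab i i.is_le)

/-- If equality holds in the geodesic polygonal path estimate, then all the points
`p₀, …, p_{2m}` lie on a common great circle, i.e. in a linear subspace of
dimension at most 2. -/
theorem spherical_polygonal_path_eq_great_circle (m n : ℕ) (hm : 2 ≤ m) (hn : 1 ≤ n)
    (p : Fin (2 * m + 1) → EuclideanSpace ℝ (Fin n))
    (hnorm : ∀ i, ‖p i‖ = 1)
    (θ : ℝ) (hθ : sphDist (p 0) (p (Fin.last (2 * m))) = θ)
    (heq : ∑ i : Fin (2 * m), sphDist (p i.castSucc) (p i.succ) = 2 * m * π - θ) :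
    ∃ S : Submodule ℝ (EuclideanSpace ℝ (Fin n)),
      Module.finrank ℝ S ≤ 2 ∧ ∀ i, p i ∈ S :=
  spherical_polygonal_path_eq_great_circle_general m n p hnorm θ hθ heq
end
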